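/- arXiv:2302.03151 — 2 statements merged into one kernel-verified Lean document; each statement's English description precedes it below -/
import Mathlib

section
/- Let φ be a 3-CNF formula with variables v_1,...,v_n (n ≥ 1) and clauses K_1,...,K_m, where each clause is a set of three literals, a literal being a pair (variable, polarity). Create one data point for each of the 2n literals, set α = 1/(2n), and consider assignments f of the 2n literal-points to two clusters C_1, C_2, each required to be nonempty. Then φ is satisfiable (there exists a truth assignment a : {v_1,...,v_n} → {True, False} under which every clause contains at least one true literal) if and only if there exists such an f with both clusters nonempty satisfying: (i) for each variable v_i, the pair group g_i = {x_{v_i}, x_{v̄_i}} is α-represented in both C_1 and C_2, i.e., |C_j ∩ g_i| ≥ α·|C_j| for j = 1,2; and (ii) for each clause K_i, the clause group g_{K_i} consisting of its three literal-points is α-represented in C_1, i.e., |C_1 ∩ g_{K_i}| ≥ α·|C_1|. (This is the correctness of the reduction from 3-SAT to the fair assignment problem; the satisfying assignment sets v_i true exactly when x_{v_i} ∈ C_1.) -/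
private lemma alpha_le_one (n : ℕ) (hn : 1 ≤ n) (s : Finset (Fin n × Bool)) :
    (1 / (2 * (n : ℝ))) * (s.card : ℝ) ≤ 1 := by
  have hn' : (0:ℝ) < (n:ℝ) := by exact_mod_cast hn
  have hcard : s.card ≤ 2 * n := by
    calc s.card ≤ Fintype.card (Fin n × Bool) := Finset.card_le_univ s
    _ = 2 * n := by simp [mul_comm]
  have h2 : (0:ℝ) < 2 * n := by positivity
  rw [div_mul_eq_mul_div, one_mul, div_le_one h2]
  exact_mod_cast hcard

private lemma alpha_pos_of_nonempty (n : ℕ) (hn : 1 ≤ n)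
    (s : Finset (Fin n × Bool)) (hs : s.Nonempty) :
    (0:ℝ) < (1 / (2 * (n : ℝ))) * (s.card : ℝ) := by
  have hn' : (0:ℝ) < (n:ℝ) := by exact_mod_cast hn
  have : (0:ℝ) < (s.card : ℝ) := by
    exact_mod_cast Finset.card_pos.mpr hs
  positivity

/-- Correctness of the reduction from 3-SAT to the fair assignment problem.
Variables are `Fin n`, a literal is a pair `(variable, polarity)`, and each
clause is a set of three literals.  One data point is created per literal,
`α = 1/(2n)`, and an assignment `f` places literal-point `l` in cluster `C₁`
when `f l = true` and in `C₂` otherwise.  The formula is satisfiable iff there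
is an assignment with both clusters nonempty such that every variable-pair
group is `α`-represented in both clusters and every clause group is
`α`-represented in `C₁`. -/
theorem threeSat_iff_fair_assignment (n m : ℕ) (hn : 1 ≤ n)
    (Ks : Fin m → Finset (Fin n × Bool)) (hK : ∀ i, (Ks i).card = 3) :
    (∃ a : Fin n → Bool, ∀ i : Fin m, ∃ l ∈ Ks i, a l.1 = l.2) ↔
    (∃ f : Fin n × Bool → Bool,
      (Finset.univ.filter (fun l : Fin n × Bool => f l = true)).Nonempty ∧
      (Finset.univ.filter (fun l : Fin n × Bool => f l = false)).Nonempty ∧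
      (∀ v : Fin n,
        (1 / (2 * (n : ℝ))) *
            ((Finset.univ.filter (fun l : Fin n × Bool => f l = true)).card : ℝ) ≤
          (((Finset.univ.filter (fun l : Fin n × Bool => f l = true)) ∩
              ({(v, true), (v, false)} : Finset (Fin n × Bool))).card : ℝ) ∧
        (1 / (2 * (n : ℝ))) *
            ((Finset.univ.filter (fun l : Fin n × Bool => f l = false)).card : ℝ) ≤
          (((Finset.univ.filter (fun l : Fin n × Bool => f l = false)) ∩
              ({(v, true), (v, false)} : Finset (Fin n × Bool))).card : ℝ)) ∧
      (∀ i : Fin m,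
        (1 / (2 * (n : ℝ))) *
            ((Finset.univ.filter (fun l : Fin n × Bool => f l = true)).card : ℝ) ≤
          (((Finset.univ.filter (fun l : Fin n × Bool => f l = true)) ∩
              Ks i).card : ℝ))) := by
  constructor
  · rintro ⟨a, ha⟩
    refine ⟨fun l => a l.1 == l.2, ?_, ?_, ?_, ?_⟩
    · exact ⟨(⟨0, hn⟩, a ⟨0, hn⟩), by simp⟩
    · exact ⟨(⟨0, hn⟩, !a ⟨0, hn⟩), by simp⟩
    · intro v
      constructor
      · refine le_trans (alpha_le_one n hn _) ?_
        have hmem : (v, a v) ∈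
            (Finset.univ.filter (fun l : Fin n × Bool => (a l.1 == l.2) = true)) ∩
              ({(v, true), (v, false)} : Finset (Fin n × Bool)) := by
          simp [Finset.mem_inter]
        have : 1 ≤ ((Finset.univ.filter (fun l : Fin n × Bool => (a l.1 == l.2) = true)) ∩
              ({(v, true), (v, false)} : Finset (Fin n × Bool))).card :=
          Finset.card_pos.mpr ⟨_, hmem⟩
        exact_mod_cast this
      · refine le_trans (alpha_le_one n hn _) ?_
        have hmem : (v, !a v) ∈
            (Finset.univ.filter (fun l : Fin n × Bool => (a l.1 == l.2) = false)) ∩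
              ({(v, true), (v, false)} : Finset (Fin n × Bool)) := by
          simp [Finset.mem_inter]
        have : 1 ≤ ((Finset.univ.filter (fun l : Fin n × Bool => (a l.1 == l.2) = false)) ∩
              ({(v, true), (v, false)} : Finset (Fin n × Bool))).card :=
          Finset.card_pos.mpr ⟨_, hmem⟩
        exact_mod_cast this
    · intro i
      obtain ⟨l, hl, hal⟩ := ha i
      refine le_trans (alpha_le_one n hn _) ?_
      have hmem : l ∈
          (Finset.univ.filter (fun l : Fin n × Bool => (a l.1 == l.2) = true)) ∩ Ks i := by
        simp [Finset.mem_inter, hl, hal]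
      have : 1 ≤ ((Finset.univ.filter (fun l : Fin n × Bool => (a l.1 == l.2) = true)) ∩
            Ks i).card := Finset.card_pos.mpr ⟨_, hmem⟩
      exact_mod_cast this
  · rintro ⟨f, h1, h2, hg, hc⟩
    refine ⟨fun v => f (v, true), fun i => ?_⟩
    have hpos := alpha_pos_of_nonempty n hn _ h1
    have hci := lt_of_lt_of_le hpos (hc i)
    have : 0 < ((Finset.univ.filter (fun l : Fin n × Bool => f l = true)) ∩ Ks i).card := by
      exact_mod_cast hci
    obtain ⟨l, hl⟩ := Finset.card_pos.mp this
    rw [Finset.mem_inter, Finset.mem_filter] at hl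
    refine ⟨l, hl.2, ?_⟩
    rcases hb : l.2 with _ | _
    · -- l.2 = false : need f (l.1, true) = false
      have hpos2 := alpha_pos_of_nonempty n hn _ h2
      have hci2 := lt_of_lt_of_le hpos2 (hg l.1).2
      have : 0 < ((Finset.univ.filter (fun x : Fin n × Bool => f x = false)) ∩
          ({(l.1, true), (l.1, false)} : Finset (Fin n × Bool))).card := by
        exact_mod_cast hci2
      obtain ⟨x, hx⟩ := Finset.card_pos.mp this
      rw [Finset.mem_inter, Finset.mem_filter] at hx
      have hxf : f x = false := hx.1.2
      have hx2 : x = (l.1, true) ∨ x = (l.1, false) := by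
        simpa using hx.2
      rcases hx2 with rfl | rfl
      · exact hxf
      · exfalso
        have hleq : l = (l.1, false) := by
          exact Prod.ext rfl hb
        rw [← hleq] at hxf
        rw [hl.1.2] at hxf
        simp at hxf
    · -- l.2 = true
      show f (l.1, true) = true
      have hleq : l = (l.1, true) := Prod.ext rfl hb
      rw [← hleq]
      exact hl.1.2
end

section
/- Let G and K be nonempty finite sets (groups and clusters), let D ≥ 1 be a natural number (the per-cluster capacity, playing the role of ⌊1/α⌋), and let β : G → ℕ satisfy β_g ≤ |K| for every g ∈ G and ∑_{g ∈ G} β_g ≤ D·|K|. Then there exists a binary matrix x : G × K → {0,1} such that ∑_{k ∈ K} x_{g,k} ≥ β_g for every g ∈ G and ∑_{g ∈ G} x_{g,k} ≤ D for every k ∈ K. That is, the pre-fixing integer program that assigns to each group at least β_g distinct clusters, with at most D groups pre-fixed to any single cluster, is feasible under these conditions. -/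
/-!
McNaughton's wrap-around rule. Write the demands of the groups one after another on the slots
`0, 1, …, D·|K| - 1`, and let slot `j` stand for cluster `j % |K|` in round `j / |K|`. A group
occupies a block of at most `|K|` consecutive slots, which wraps around onto distinct clusters,
and a cluster owns only `D` slots, one per round.
-/

open Finset Function

section Layout

variable {G : Type*} [LinearOrder G] [Fintype G] (β : G → ℕ)

def blockStart (g : G) : ℕ := ∑ g' ∈ univ.filter (· < g), β g'

lemma blockStart_add_le_sum (g : G) : blockStart β g + β g ≤ ∑ g', β g' := by
  rw [blockStart, add_comm, ← sum_insert (by simp)]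
  exact sum_le_sum_of_subset (subset_univ _)

lemma blockStart_add_le_of_lt {g g' : G} (h : g < g') :
    blockStart β g + β g ≤ blockStart β g' := by
  rw [blockStart, add_comm, ← sum_insert (by simp)]
  refine sum_le_sum_of_subset fun a ha => ?_
  simp only [mem_insert, mem_filter, mem_univ, true_and] at ha ⊢
  rcases ha with rfl | ha
  · exact h
  · exact ha.trans h

lemma blockStart_add_injective :
    Injective fun a : (Σ g, Fin (β g)) => blockStart β a.1 + a.2 := by
  rintro ⟨g, i⟩ ⟨g', i'⟩ h
  dsimp only at h
  rcases lt_trichotomy g g' with hlt | rfl | hgt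
  · have := blockStart_add_le_of_lt β hlt; omega
  · exact congrArg (Sigma.mk g) (Fin.ext (by omega))
  · have := blockStart_add_le_of_lt β hgt; omega

end Layout

lemma exists_wrapAround_slots {G K : Type*} [Fintype G] [Fintype K] (D : ℕ) (β : G → ℕ)
    (hβK : ∀ g, β g ≤ Fintype.card K) (hsum : ∑ g, β g ≤ D * Fintype.card K) :
    ∃ σ : (Σ g, Fin (β g)) → Fin D × K,
      Injective σ ∧ ∀ g, Injective fun j => (σ ⟨g, j⟩).2 := by
  let _ := LinearOrder.lift' _ (Fintype.equivFin G).injective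
  let e := Fintype.equivFin K
  have hlt (a : Σ g, Fin (β g)) : blockStart β a.1 + a.2 < D * Fintype.card K :=
    calc blockStart β a.1 + a.2 < blockStart β a.1 + β a.1 := by have := a.2.isLt; omega
      _ ≤ D * Fintype.card K := (blockStart_add_le_sum β a.1).trans hsum
  refine ⟨fun a => Prod.map id e.symm (finProdFinEquiv.symm ⟨_, hlt a⟩), ?_,
    fun g i j hij => ?_⟩
  · exact (injective_id.prodMap e.symm.injective).comp <| finProdFinEquiv.symm.injective.comp
      fun a b h => blockStart_add_injective β (Fin.mk.inj_iff.mp h)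
  · have hmod := congrArg Fin.val (e.symm.injective hij)
    simp only [Fin.coe_modNat] at hmod
    exact Fin.ext <| Nat.ModEq.eq_of_lt_of_lt (Nat.ModEq.add_left_cancel' _ hmod)
      (i.isLt.trans_le (hβK g)) (j.isLt.trans_le (hβK g))

lemma exists_assignment_of_slots {G K : Type*} [Fintype G] [Fintype K] [DecidableEq K]
    {D : ℕ} {β : G → ℕ} (σ : (Σ g, Fin (β g)) → Fin D × K)
    (hσ : Injective σ) (hfib : ∀ g, Injective fun j => (σ ⟨g, j⟩).2) :
    ∃ x : G → K → Bool,
      (∀ g : G, β g ≤ (Finset.univ.filter (fun k => x g k = true)).card) ∧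
      (∀ k : K, (Finset.univ.filter (fun g => x g k = true)).card ≤ D) := by
  refine ⟨fun g k => decide (∃ j, (σ ⟨g, j⟩).2 = k), fun g => ?_, fun k => ?_⟩
  · simpa using card_le_card_of_injOn (s := univ) _ (fun j _ => by simp) (hfib g).injOn
  · calc #{g | decide (∃ j, (σ ⟨g, j⟩).2 = k) = true}
        ≤ #{a | (σ a).2 = k} :=
          card_le_card_of_surjOn Sigma.fst fun g hg => by
            simp only [coe_filter, mem_univ, true_and, decide_eq_true_eq, Set.mem_ofPred_eq] at hg
            obtain ⟨j, hj⟩ := hg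
            exact ⟨⟨g, j⟩, by simpa using hj, rfl⟩
      _ ≤ #(univ : Finset (Fin D)) :=
          card_le_card_of_injOn (fun a => (σ a).1) (fun _ _ => mem_univ _) fun a ha b hb h =>
            hσ (Prod.ext h (by simp_all))
      _ = D := by simp

theorem prefix_ip_feasible_general {G K : Type*} [Fintype G] [Fintype K]
    (D : ℕ) (β : G → ℕ)
    (hβK : ∀ g : G, β g ≤ Fintype.card K)
    (hsum : ∑ g : G, β g ≤ D * Fintype.card K) :
    ∃ x : G → K → Bool,
      (∀ g : G, β g ≤ (Finset.univ.filter (fun k => x g k = true)).card) ∧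
      (∀ k : K, (Finset.univ.filter (fun g => x g k = true)).card ≤ D) := by
  classical
  obtain ⟨σ, hσ, hfib⟩ := exists_wrapAround_slots D β hβK hsum
  exact exists_assignment_of_slots σ hσ hfib

/-- Feasibility of the pre-fixing integer program: if each group demands at most
`|K|` clusters and the total demand is at most `D·|K|`, then there is a 0-1
assignment giving each group `g` at least `β g` distinct clusters with at most
`D` groups pre-fixed to any single cluster. -/
theorem prefix_ip_feasible {G K : Type*} [Fintype G] [Fintype K]
    [Nonempty G] [Nonempty K]
    (D : ℕ) (hD : 1 ≤ D) (β : G → ℕ)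
    (hβK : ∀ g : G, β g ≤ Fintype.card K)
    (hsum : ∑ g : G, β g ≤ D * Fintype.card K) :
    ∃ x : G → K → Bool,
      (∀ g : G, β g ≤ (Finset.univ.filter (fun k => x g k = true)).card) ∧
      (∀ k : K, (Finset.univ.filter (fun g => x g k = true)).card ≤ D) :=
  prefix_ip_feasible_general D β hβK hsum
end
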